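/- Let X be a skew brace and define x ▷ y = y^∘ ∘ (x * y), where y^∘ denotes the ∘-inverse of y. Then for all x, y, z ∈ X: (x ▷ y) ▷ (z ▷ y) = ((z * y)^∘ ∘ x) * (z * y)^{∘*}, where (z*y)^{∘*} denotes the *-inverse of the ∘-inverse of z*y. -/
import Mathlib


structure SkewBrace (X : Type*) where
  circ : X → X → X
  cinv : X → X
  ce : X
  star : X → X → X
  sinv : X → X
  se : X
  circ_assoc : ∀ a b c, circ (circ a b) c = circ a (circ b c)
  ce_circ : ∀ a, circ ce a = a
  circ_ce : ∀ a, circ a ce = a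
  cinv_circ : ∀ a, circ (cinv a) a = ce
  circ_cinv : ∀ a, circ a (cinv a) = ce
  star_assoc : ∀ a b c, star (star a b) c = star a (star b c)
  se_star : ∀ a, star se a = a
  star_se : ∀ a, star a se = a
  sinv_star : ∀ a, star (sinv a) a = se
  star_sinv : ∀ a, star a (sinv a) = se
  distrib : ∀ x y z, circ x (star y z) = star (star (circ x y) (sinv x)) (circ x z)

def SkewBrace.tri {X : Type*} (B : SkewBrace X) (x y : X) : X :=
  B.circ (B.cinv y) (B.star x y)

def SkewBrace.ov {X : Type*} (B : SkewBrace X) (x y : X) : X :=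
  B.circ (B.cinv y) (B.star y x)

def SkewBrace.triInv {X : Type*} (B : SkewBrace X) (x y : X) : X :=
  B.star (B.circ y x) (B.sinv y)

def SkewBrace.ovInv {X : Type*} (B : SkewBrace X) (x y : X) : X :=
  B.star (B.sinv y) (B.circ y x)

namespace SkewBrace

variable {X : Type*} (B : SkewBrace X)

lemma cinv_unique (u a : X) (h : B.circ u a = B.ce) : u = B.cinv a := by
  have : B.circ (B.circ u a) (B.cinv a) = B.circ B.ce (B.cinv a) := by rw [h]
  rwa [B.circ_assoc, B.circ_cinv, B.circ_ce, B.ce_circ] at this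

lemma cinv_circ_eq (a b : X) :
    B.cinv (B.circ a b) = B.circ (B.cinv b) (B.cinv a) := by
  refine (B.cinv_unique _ _ ?_).symm
  rw [B.circ_assoc, ← B.circ_assoc (B.cinv a) a b, B.cinv_circ, B.ce_circ, B.cinv_circ]

lemma circ_se (a : X) : B.circ a B.se = a := by
  have h := B.distrib a B.se B.se
  rw [B.se_star] at h
  have h2 : B.star (B.circ a B.se) (B.sinv (B.circ a B.se)) =
      B.star (B.star (B.star (B.circ a B.se) (B.sinv a)) (B.circ a B.se))
        (B.sinv (B.circ a B.se)) := by rw [← h]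
  rw [B.star_sinv, B.star_assoc, B.star_sinv, B.star_se] at h2
  have h6 : B.star (B.star (B.circ a B.se) (B.sinv a)) a = B.star B.se a := by rw [← h2]
  rwa [B.star_assoc, B.sinv_star, B.star_se, B.se_star] at h6

lemma ce_eq_se : B.ce = B.se := by
  have h := B.circ_se B.ce
  rw [B.ce_circ] at h
  exact h.symm

lemma cinv_cinv (a : X) : B.cinv (B.cinv a) = a := by
  refine (B.cinv_unique _ _ ?_).symm
  exact B.circ_cinv a

end SkewBrace

theorem skewBrace_tri_tri_formula {X : Type*} (B : SkewBrace X) (x y z : X) :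
    B.tri (B.tri x y) (B.tri z y) =
      B.star (B.circ (B.cinv (B.star z y)) x) (B.sinv (B.cinv (B.star z y))) := by
  set d := B.cinv (B.star z y) with hd
  have hcinv : B.cinv (B.tri z y) = B.circ d y := by
    rw [SkewBrace.tri, B.cinv_circ_eq, B.cinv_cinv]
  rw [SkewBrace.tri, B.distrib, B.cinv_circ, B.ce_eq_se, B.star_se, hcinv]
  have h1 : B.circ (B.circ d y) (B.tri x y) = B.circ d (B.star x y) := by
    rw [SkewBrace.tri, ← B.circ_assoc, B.circ_assoc d y (B.cinv y), B.circ_cinv, B.circ_ce]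
  rw [h1, B.distrib, B.star_assoc, B.star_assoc, B.star_sinv, B.star_se]
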